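/- The map on simple semisimple matrices fixing each eigenline and conjugating each eigenvalue, A = (ℓ | λ) ↦ (ℓ | conj(λ)) (same eigenlines ℓ_i, eigenvalues conj(λ_i)), agrees with A ↦ Φ(A)* where Φ(S N S^{−1}) := S^{−1} N S for S positive definite and N normal; i.e., for diagonalizable A with decomposition A = S N S^{−1}, the matrix (S^{−1} N S)* has the same eigenspaces as A with complex-conjugated eigenvalues. -/

import Mathlib

/-!
Since `S` is Hermitian, `(S⁻¹ N S)ᴴ = S Nᴴ S⁻¹`, so both matrices are conjugates by the same `S`,
of `Nᴴ` and of `N` respectively, and conjugation by `S` moves eigenspaces by `S`. It remains that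
a normal `N` has the same `μ`-eigenspace as `Nᴴ` has for `conj μ`: `N - μ` is again normal, and a
normal operator `T` satisfies `‖T v‖ = ‖T† v‖`, so `T` and `T†` have the same kernel.
-/

open Matrix
open scoped ComplexOrder

namespace Module.End

variable {R M : Type*} [CommRing R] [AddCommGroup M] [Module R M]

theorem eigenspace_mul_mul_of_mul_eq_one {f g h : End R M} (hgh : g * h = 1) (hhg : h * g = 1)
    (μ : R) : eigenspace (g * f * h) μ = (eigenspace f μ).comap h := by
  ext x
  simp only [Submodule.mem_comap, mem_eigenspace_iff, mul_apply]
  have hg_inv (y : M) : g (h y) = y := by simpa using LinearMap.congr_fun hgh y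
  have hh_inv (y : M) : h (g y) = y := by simpa using LinearMap.congr_fun hhg y
  constructor
  · intro hx
    simpa [hh_inv] using congr(h $hx)
  · intro hx
    simpa [hg_inv] using congr(g $hx)

end Module.End

namespace ContinuousLinearMap

variable {𝕜 E : Type*} [RCLike 𝕜] [NormedAddCommGroup E] [InnerProductSpace 𝕜 E] [CompleteSpace E]

theorem IsStarNormal.eigenspace_adjoint {T : E →L[𝕜] E} (hT : IsStarNormal T) (μ : 𝕜) :
    Module.End.eigenspace (adjoint T : E →ₗ[𝕜] E) (starRingEnd 𝕜 μ)
      = Module.End.eigenspace (T : E →ₗ[𝕜] E) μ := by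
  have hshift : IsStarNormal (T - μ • 1) :=
    Commute.isStarNormal_sub (by simpa [star_smul] using (Commute.one_right T).smul_right (star μ))
  ext x
  simpa [Module.End.mem_eigenspace_iff, sub_eq_zero, ← star_eq_adjoint, star_sub, star_smul]
    using IsStarNormal.adjoint_apply_eq_zero_iff hshift x

end ContinuousLinearMap

namespace Matrix

variable {𝕜 n : Type*} [RCLike 𝕜] [Fintype n] [DecidableEq n]

theorem IsHermitian.conjTranspose_inv_mul_mul {S : Matrix n n 𝕜} (hS : S.IsHermitian)
    (N : Matrix n n 𝕜) : (S⁻¹ * N * S)ᴴ = S * Nᴴ * S⁻¹ := by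
  rw [conjTranspose_mul, conjTranspose_mul, conjTranspose_nonsing_inv, hS.eq, Matrix.mul_assoc]

theorem toEuclideanLin_mul (A B : Matrix n n 𝕜) :
    toEuclideanLin (A * B) = toEuclideanLin A * toEuclideanLin B := by
  simp [← coe_toEuclideanCLM_eq_toEuclideanLin, Module.End.mul_eq_comp]

theorem eigenspace_toEuclideanLin_mul_mul_inv {S : Matrix n n 𝕜} (hS : IsUnit S.det)
    (M : Matrix n n 𝕜) (μ : 𝕜) :
    Module.End.eigenspace (toEuclideanLin (S * M * S⁻¹)) μ
      = (Module.End.eigenspace (toEuclideanLin M) μ).comap (toEuclideanLin S⁻¹) := by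
  rw [toEuclideanLin_mul, toEuclideanLin_mul]
  exact Module.End.eigenspace_mul_mul_of_mul_eq_one
    (by rw [← toEuclideanLin_mul, mul_nonsing_inv S hS]; simp [Module.End.one_eq_id])
    (by rw [← toEuclideanLin_mul, nonsing_inv_mul S hS]; simp [Module.End.one_eq_id]) μ

theorem eigenspace_toEuclideanLin_conjTranspose {N : Matrix n n 𝕜} (hN : IsStarNormal N)
    (μ : 𝕜) :
    Module.End.eigenspace (toEuclideanLin Nᴴ) (starRingEnd 𝕜 μ)
      = Module.End.eigenspace (toEuclideanLin N) μ := by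
  have h := ContinuousLinearMap.IsStarNormal.eigenspace_adjoint
    (hN.map (toEuclideanCLM (n := n) (𝕜 := 𝕜))) μ
  rwa [← ContinuousLinearMap.star_eq_adjoint, ← map_star, coe_toEuclideanCLM_eq_toEuclideanLin,
    coe_toEuclideanCLM_eq_toEuclideanLin, star_eq_conjTranspose] at h

end Matrix

theorem stmt18_general (n : ℕ) (S N : Matrix (Fin n) (Fin n) ℂ)
    (hS : S.PosDef) (hN : Nᴴ * N = N * Nᴴ)
    (lam : Fin n → ℂ) :
    ∀ i, Module.End.eigenspace (Matrix.toEuclideanLin ((S⁻¹ * N * S)ᴴ))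
        ((starRingEnd ℂ) (lam i))
      = Module.End.eigenspace (Matrix.toEuclideanLin (S * N * S⁻¹)) (lam i) := by
  intro i
  have hdet : IsUnit S.det := isUnit_iff_ne_zero.mpr hS.det_pos.ne'
  rw [hS.isHermitian.conjTranspose_inv_mul_mul, eigenspace_toEuclideanLin_mul_mul_inv hdet,
    eigenspace_toEuclideanLin_mul_mul_inv hdet, eigenspace_toEuclideanLin_conjTranspose ⟨hN⟩]

/-- For a simple-spectrum diagonalizable `A = S N S⁻¹` (`S` positive definite,
`N` normal), the matrix `Φ(A)* = (S⁻¹ N S)ᴴ` has the same eigenspaces as `A`,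
with complex-conjugated eigenvalues: the map `(ℓ | λ) ↦ (ℓ | conj λ)` agrees
with `A ↦ Φ(A)*`. -/
theorem stmt18 (n : ℕ) (S N : Matrix (Fin n) (Fin n) ℂ)
    (hS : S.PosDef) (hN : Nᴴ * N = N * Nᴴ)
    (lam : Fin n → ℂ) (hlam : Function.Injective lam)
    (hne : ∀ i, Module.End.eigenspace (Matrix.toEuclideanLin (S * N * S⁻¹)) (lam i) ≠ ⊥) :
    ∀ i, Module.End.eigenspace (Matrix.toEuclideanLin ((S⁻¹ * N * S)ᴴ))
        ((starRingEnd ℂ) (lam i))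
      = Module.End.eigenspace (Matrix.toEuclideanLin (S * N * S⁻¹)) (lam i) :=
  stmt18_general n S N hS hN lam
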